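/- Products of independent imaginary complex octonions are never nonzero scalars: let x, y ∈ Im 𝕆^ℂ be imaginary complex octonions that are linearly independent over ℂ. If the product x*y lies in the scalar line ℂ • 1 ⊆ 𝕆^ℂ, then x*y = 0 (so span{x,y} is a null-plane). Equivalently, for linearly independent imaginary x, y, the linear form z ↦ Re((x*y)*z) vanishes identically on Im 𝕆^ℂ if and only if x*y = 0. -/

import Mathlib

noncomputable section

/-- The Cayley–Dickson product on the complex octonions
`𝕆^ℂ = Quaternion ℂ × Quaternion ℂ`:  `(a,b)·(c,d) = (a c - d* b, b c* + d a)`. -/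
def octMul (x y : Quaternion ℂ × Quaternion ℂ) : Quaternion ℂ × Quaternion ℂ :=
  (x.1 * y.1 - star y.2 * x.2, x.2 * star y.1 + y.2 * x.1)

/-!
For imaginary `x` the conjugate is `x̄ = -x`, and the Cayley–Dickson product satisfies the
composition identity `x̄ (x y) = q(x) y`.  Hence if `x y = c` is a scalar, then
`-c x = x̄ c = q(x) y`, and linear independence of `x, y` forces `c = 0`.  Conversely, if
`Re (p z) = 0` for every imaginary `z`, testing `z` against the quaternion units in both halves
shows that `p` is a scalar, which reduces the second statement to the first.
-/

open scoped Quaternion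

namespace Quaternion

variable {R : Type*} [CommRing R]

theorem eq_zero_of_forall_re_mul_eq_zero {q : ℍ[R]} (h : ∀ e : ℍ[R], (e * q).re = 0) :
    q = 0 := by
  -- the units `i, j, k` are built through `equivTuple`: an anonymous constructor would
  -- elaborate in `ℍ[R,-1,0,-1]`, where the `ℍ[R]` lemmas do not apply
  have h1 := h 1
  have hi := h ((equivTuple R).symm ![0, 1, 0, 0])
  have hj := h ((equivTuple R).symm ![0, 0, 1, 0])
  have hk := h ((equivTuple R).symm ![0, 0, 0, 1])
  rw [one_mul] at h1
  rw [re_mul] at hi hj hk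
  ext <;> simp_all

theorem eq_coe_re_of_forall_re_mul_eq_zero {q : ℍ[R]}
    (h : ∀ w : ℍ[R], w.re = 0 → (q * w).re = 0) : q = (q.re : ℍ[R]) := by
  have hi := h ((equivTuple R).symm ![0, 1, 0, 0]) rfl
  have hj := h ((equivTuple R).symm ![0, 0, 1, 0]) rfl
  have hk := h ((equivTuple R).symm ![0, 0, 0, 1]) rfl
  rw [re_mul] at hi hj hk
  ext <;> simp_all

end Quaternion

def octConj (x : ℍ[ℂ] × ℍ[ℂ]) : ℍ[ℂ] × ℍ[ℂ] := (star x.1, -x.2)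

def octNorm (x : ℍ[ℂ] × ℍ[ℂ]) : ℂ := Quaternion.normSq x.1 + Quaternion.normSq x.2

theorem octConj_eq_neg {x : ℍ[ℂ] × ℍ[ℂ]} (hx : x.1.re = 0) : octConj x = -x :=
  Prod.ext (Quaternion.star_eq_neg.2 hx) rfl

theorem octMul_smul_one (x : ℍ[ℂ] × ℍ[ℂ]) (c : ℂ) : octMul x (c • (1, 0)) = c • x := by
  ext : 1 <;> simp [octMul, ← Quaternion.coe_mul_eq_smul, Quaternion.coe_commutes]

theorem zero_octMul (z : ℍ[ℂ] × ℍ[ℂ]) : octMul 0 z = 0 := by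
  ext : 1 <;> simp [octMul]

theorem octMul_octConj_octMul (x y : ℍ[ℂ] × ℍ[ℂ]) :
    octMul (octConj x) (octMul x y) = octNorm x • y := by
  rcases x with ⟨a, b⟩
  rcases y with ⟨u, d⟩
  ext : 1
  -- the generic `star_add` / `star_sub` only unify on `ℍ[ℂ]` once the type is given
  · calc star a * (a * u - star d * b) - star (b * star u + d * a) * -b
        = star a * a * u + u * (star b * b) := by
          rw [star_add (R := ℍ[ℂ]), star_mul, star_mul, star_star]; grind
      _ = _ := by
          rw [Quaternion.star_mul_self, Quaternion.star_mul_self, ← Quaternion.coe_commutes,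
            ← add_mul, ← Quaternion.coe_add, Quaternion.coe_mul_eq_smul]
          rfl
  · calc -b * star (a * u - star d * b) + (b * star u + d * a) * star a
        = d * (a * star a) + b * star b * d := by
          rw [star_sub (R := ℍ[ℂ]), star_mul, star_mul, star_star]; grind
      _ = _ := by
          rw [Quaternion.self_mul_star, Quaternion.self_mul_star, ← Quaternion.coe_commutes,
            ← add_mul, ← Quaternion.coe_add, Quaternion.coe_mul_eq_smul]
          rfl

theorem eq_smul_one_of_forall_re_octMul_eq_zero {p : ℍ[ℂ] × ℍ[ℂ]}
    (h : ∀ z : ℍ[ℂ] × ℍ[ℂ], z.1.re = 0 → (octMul p z).1.re = 0) :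
    p = p.1.re • ((1 : ℍ[ℂ]), (0 : ℍ[ℂ])) := by
  have hp₁ : p.1 = (p.1.re : ℍ[ℂ]) :=
    Quaternion.eq_coe_re_of_forall_re_mul_eq_zero fun w hw => by
      simpa [octMul] using h (w, 0) hw
  have hp₂ : p.2 = 0 :=
    Quaternion.eq_zero_of_forall_re_mul_eq_zero fun e => by
      have he := h (0, star e) rfl
      simp only [octMul, star_star, mul_zero, zero_sub, Quaternion.re_neg] at he
      exact neg_eq_zero.mp he
  refine Prod.ext ?_ ?_
  · rw [Prod.smul_fst, ← Quaternion.coe_mul_eq_smul, mul_one]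
    exact hp₁
  · rw [Prod.smul_snd, smul_zero]
    exact hp₂

theorem octMul_eq_zero_of_eq_smul_one {x y : ℍ[ℂ] × ℍ[ℂ]} (hx : x.1.re = 0)
    (hind : LinearIndependent ℂ ![x, y]) {c : ℂ}
    (h : octMul x y = c • ((1 : ℍ[ℂ]), (0 : ℍ[ℂ]))) : octMul x y = 0 := by
  have hrel : c • x + octNorm x • y = 0 := by
    have hcomp := octMul_octConj_octMul x y
    rw [h, octMul_smul_one, octConj_eq_neg hx, smul_neg] at hcomp
    rw [← hcomp, add_neg_cancel]
  obtain ⟨rfl, -⟩ := LinearIndependent.pair_iff.mp hind c (octNorm x) hrel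
  rw [h]
  exact zero_smul ℂ ((1 : ℍ[ℂ]), (0 : ℍ[ℂ]))

theorem product_of_independent_imaginary_octonions_general
    (x y : Quaternion ℂ × Quaternion ℂ)
    (hxIm : x.1.re = 0)
    (hind : LinearIndependent ℂ ![x, y]) :
    ((∃ c : ℂ, octMul x y = c • (((1 : Quaternion ℂ), (0 : Quaternion ℂ)))) →
      octMul x y = 0) ∧
    ((∀ z : Quaternion ℂ × Quaternion ℂ, z.1.re = 0 →
        (octMul (octMul x y) z).1.re = 0) ↔ octMul x y = 0) := by
  have scalar_eq_zero :
      (∃ c : ℂ, octMul x y = c • (((1 : Quaternion ℂ), (0 : Quaternion ℂ)))) →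
        octMul x y = 0 :=
    fun ⟨_, hc⟩ => octMul_eq_zero_of_eq_smul_one hxIm hind hc
  refine ⟨scalar_eq_zero, fun h => scalar_eq_zero ⟨_, eq_smul_one_of_forall_re_octMul_eq_zero h⟩,
    fun h z _ => ?_⟩
  rw [h, zero_octMul]
  rfl

/-- Products of linearly independent imaginary complex octonions are never nonzero
scalars: if `x * y` lies on the scalar line `ℂ • 1` then `x * y = 0`.  Equivalently, the
linear form `z ↦ Re ((x * y) * z)` vanishes identically on `Im 𝕆^ℂ` iff `x * y = 0`. -/
theorem product_of_independent_imaginary_octonions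
    (x y : Quaternion ℂ × Quaternion ℂ)
    (hxIm : x.1.re = 0) (hyIm : y.1.re = 0)
    (hind : LinearIndependent ℂ ![x, y]) :
    ((∃ c : ℂ, octMul x y = c • (((1 : Quaternion ℂ), (0 : Quaternion ℂ)))) →
      octMul x y = 0) ∧
    ((∀ z : Quaternion ℂ × Quaternion ℂ, z.1.re = 0 →
        (octMul (octMul x y) z).1.re = 0) ↔ octMul x y = 0) :=
  product_of_independent_imaginary_octonions_general x y hxIm hind
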